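/- arXiv:1512.09278 — 2 statements merged into one kernel-verified Lean document; each statement's English description precedes it below -/
import Mathlib

section
/- For all integers A ≥ 1, B ≥ 1 and every complex u ≠ 1, the second derivative of u ↦ f_{A,B}(u) at u equals A·B·[ f_{A−1,B−1}(u) + f_{A−1,B+1}(u) + f_{A+1,B−1}(u) + f_{A+1,B+1}(u) − 2 f_{A−1,B}(u) − 2 f_{A,B−1}(u) − 2 f_{A+1,B}(u) − 2 f_{A,B+1}(u) + 4 f_{A,B}(u) ]. -/
/-!
Write `g = 1 + (u + z - 1)⁻¹` and `h = 1 - z⁻¹`, so that `f A B u = (2πi)⁻¹ ∮ g ^ A * h ^ B`.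
Both `∂g/∂u` and `∂g/∂z` equal `-(g - 1)²`, while `∂h/∂z = (h - 1)²`, and
`n x ^ (n - 1) (x - 1)² = n (x ^ (n + 1) - 2 x ^ n + x ^ (n - 1))`. Since by Cauchy's theorem the
radius of the circle may be frozen locally in `u`, differentiating under the integral sign gives
`f' = -A Δ_A f`, with `Δ_A` the second difference in `A`. The `z`-derivative of the integrand
integrates to zero over the circle, which gives `A Δ_A f = B Δ_B f`, i.e. also `f' = -B Δ_B f`.
Applying the first formula and then the second to each term yields `f'' = A B Δ_A Δ_B f`.
-/

/-- `f A B u` is the contour integral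
`(1/(2πi)) ∮_{|z|=r} (1 + 1/(u+z−1))^A (1 − 1/z)^B dz`
over a circle of radius `0 < r < |1−u|` centered at `0` (here `r = |1−u|/2`);
the value is independent of the choice of such `r`. -/
noncomputable def f (A B : ℕ) (u : ℂ) : ℂ :=
  (2 * Real.pi * Complex.I)⁻¹ *
    (∮ z in C(0, ‖1 - u‖ / 2), (1 + (u + z - 1)⁻¹) ^ A * (1 - z⁻¹) ^ B)

open Complex Metric Set Topology

section CircleIntegral

variable {E : Type*} [NormedAddCommGroup E] [NormedSpace ℂ E]

theorem continuous_circleMap_smul_of_continuousOn {G : ℂ → ℂ → E} {K : Set ℂ} {c u : ℂ} {R : ℝ}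
    (hR : 0 ≤ R) (hG : ContinuousOn (Function.uncurry G) (K ×ˢ sphere c R)) (hu : u ∈ K) :
    Continuous fun θ => deriv (circleMap c R) θ • G u (circleMap c R θ) := by
  have h := hG.comp_continuous (continuous_const.prodMk (continuous_circleMap c R))
    fun θ => ⟨hu, circleMap_mem_sphere c hR θ⟩
  simp only [deriv_circleMap]
  exact ((continuous_circleMap 0 R).mul continuous_const).smul h

theorem hasDerivAt_circleIntegral_of_continuousOn {F F' : ℂ → ℂ → E} {u₀ c : ℂ} {R ε : ℝ}
    (hR : 0 ≤ R) (hε : 0 < ε)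
    (hF : ContinuousOn (Function.uncurry F) (closedBall u₀ ε ×ˢ sphere c R))
    (hF' : ContinuousOn (Function.uncurry F') (closedBall u₀ ε ×ˢ sphere c R))
    (hderiv : ∀ u ∈ ball u₀ ε, ∀ z ∈ sphere c R, HasDerivAt (F · z) (F' u z) u) :
    HasDerivAt (fun u => ∮ z in C(c, R), F u z) (∮ z in C(c, R), F' u₀ z) u₀ := by
  obtain ⟨M, hM⟩ :=
    ((isCompact_closedBall u₀ ε).prod (isCompact_sphere c R)).exists_bound_of_continuousOn hF'
  have hu₀ : u₀ ∈ closedBall u₀ ε := mem_closedBall_self hε.le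
  refine (intervalIntegral.hasDerivAt_integral_of_dominated_loc_of_deriv_le
    (a := 0) (b := 2 * Real.pi)
    (F := fun u θ => deriv (circleMap c R) θ • F u (circleMap c R θ))
    (F' := fun u θ => deriv (circleMap c R) θ • F' u (circleMap c R θ))
    (bound := fun _ => R * M) (ball_mem_nhds u₀ hε) ?_
    ((continuous_circleMap_smul_of_continuousOn hR hF hu₀).intervalIntegrable _ _)
    (continuous_circleMap_smul_of_continuousOn hR hF' hu₀).aestronglyMeasurable
    (.of_forall fun θ _ u hu => ?_) intervalIntegrable_const
    (.of_forall fun θ _ u hu => ?_)).2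
  · filter_upwards [ball_mem_nhds u₀ hε] with u hu
    exact (continuous_circleMap_smul_of_continuousOn hR hF
      (ball_subset_closedBall hu)).aestronglyMeasurable
  · rw [norm_smul, deriv_circleMap, norm_mul, Complex.norm_I, mul_one, norm_circleMap_zero,
      abs_of_nonneg hR]
    exact mul_le_mul_of_nonneg_left
      (hM (u, _) ⟨ball_subset_closedBall hu, circleMap_mem_sphere c hR θ⟩) hR
  · exact (hderiv u hu _ (circleMap_mem_sphere c hR θ)).const_smul _

theorem circleIntegral_eq_of_differentiableOn_ball_diff_center [CompleteSpace E] {F : ℂ → E}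
    {c : ℂ} {R r₁ r₂ : ℝ} (hF : DifferentiableOn ℂ F (ball c R \ {c})) (h₁ : 0 < r₁) (h₁R : r₁ < R)
    (h₂ : 0 < r₂) (h₂R : r₂ < R) :
    (∮ z in C(c, r₁), F z) = ∮ z in C(c, r₂), F z := by
  wlog h : r₁ ≤ r₂ generalizing r₁ r₂
  · exact (this h₂ h₂R h₁ h₁R (le_of_not_ge h)).symm
  have hsub : closedBall c r₂ \ ball c r₁ ⊆ ball c R \ {c} := fun z ⟨hz₂, hz₁⟩ =>
    ⟨closedBall_subset_ball h₂R hz₂, fun hzc => hz₁ (hzc ▸ mem_ball_self h₁)⟩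
  refine (circleIntegral_eq_of_differentiable_on_annulus_off_countable h₁ h countable_empty
    (hF.continuousOn.mono hsub) fun z hz => hF.differentiableAt ?_).symm
  exact (isOpen_ball.sdiff isClosed_singleton).mem_nhds
    (hsub ⟨ball_subset_closedBall hz.1.1, fun hz₁ => hz.1.2 (ball_subset_closedBall hz₁)⟩)

end CircleIntegral

theorem natCast_mul_pow_pred_mul_sub_one_sq {R : Type*} [CommRing R] (n : ℕ) (x : R) :
    n * x ^ (n - 1) * (x - 1) ^ 2 = n * (x ^ (n + 1) - 2 * x ^ n + x ^ (n - 1)) := by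
  cases n with
  | zero => simp
  | succ n => simp only [Nat.add_sub_cancel]; push_cast; ring

section InversePowers

variable {𝕜 : Type*} [NontriviallyNormedField 𝕜]

theorem hasDerivAt_one_add_inv_pow (n : ℕ) {w : 𝕜} (hw : w ≠ 0) :
    HasDerivAt (fun w => (1 + w⁻¹) ^ n)
      (-(n * ((1 + w⁻¹) ^ (n + 1) - 2 * (1 + w⁻¹) ^ n + (1 + w⁻¹) ^ (n - 1)))) w := by
  refine (((hasDerivAt_inv hw).const_add 1).pow n).congr_deriv ?_
  rw [← natCast_mul_pow_pred_mul_sub_one_sq, add_sub_cancel_left, inv_pow]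
  ring

theorem hasDerivAt_one_sub_inv_pow (n : ℕ) {z : 𝕜} (hz : z ≠ 0) :
    HasDerivAt (fun z => (1 - z⁻¹) ^ n)
      (n * ((1 - z⁻¹) ^ (n + 1) - 2 * (1 - z⁻¹) ^ n + (1 - z⁻¹) ^ (n - 1))) z := by
  refine (((hasDerivAt_inv hz).const_sub 1).pow n).congr_deriv ?_
  rw [← natCast_mul_pow_pred_mul_sub_one_sq, sub_sub_cancel_left, neg_sq, inv_pow]
  ring

end InversePowers

noncomputable def fIntegrand (A B : ℕ) (u z : ℂ) : ℂ := (1 + (u + z - 1)⁻¹) ^ A * (1 - z⁻¹) ^ B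

theorem add_sub_one_ne_zero_of_norm_lt {u z : ℂ} (h : ‖z‖ < ‖1 - u‖) : u + z - 1 ≠ 0 := by
  intro h0
  rw [show z = 1 - u by linear_combination h0] at h
  exact lt_irrefl _ h

theorem hasDerivAt_fIntegrand_u (A B : ℕ) {u z : ℂ} (h : u + z - 1 ≠ 0) :
    HasDerivAt (fIntegrand A B · z)
      (-A * (fIntegrand (A + 1) B u z - 2 * fIntegrand A B u z + fIntegrand (A - 1) B u z)) u := by
  have hshift : HasDerivAt (fun u : ℂ => u + z - 1) 1 u :=
    ((hasDerivAt_id u).add_const z).sub_const 1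
  refine (((hasDerivAt_one_add_inv_pow A h).comp u hshift).mul_const
    ((1 - z⁻¹) ^ B)).congr_deriv ?_
  simp only [fIntegrand]
  ring

theorem hasDerivAt_fIntegrand_z (A B : ℕ) {u z : ℂ} (hz : z ≠ 0) (h : u + z - 1 ≠ 0) :
    HasDerivAt (fIntegrand A B u)
      (B * (fIntegrand A (B + 1) u z - 2 * fIntegrand A B u z + fIntegrand A (B - 1) u z) -
        A * (fIntegrand (A + 1) B u z - 2 * fIntegrand A B u z + fIntegrand (A - 1) B u z)) z := by
  have hshift : HasDerivAt (fun z : ℂ => u + z - 1) 1 z :=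
    ((hasDerivAt_id z).const_add u).sub_const 1
  refine (((hasDerivAt_one_add_inv_pow A h).comp z hshift).mul
    (hasDerivAt_one_sub_inv_pow B hz)).congr_deriv ?_
  simp only [fIntegrand, Function.comp_apply]
  ring

theorem continuousOn_uncurry_fIntegrand (A B : ℕ) {s : Set (ℂ × ℂ)}
    (hs : ∀ p ∈ s, p.2 ≠ 0 ∧ p.1 + p.2 - 1 ≠ 0) :
    ContinuousOn (Function.uncurry (fIntegrand A B)) s := by
  intro p hp
  obtain ⟨hz, h⟩ := hs p hp
  unfold fIntegrand Function.uncurry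
  exact ContinuousAt.continuousWithinAt (by fun_prop (disch := assumption))

theorem continuousOn_fIntegrand_sphere (A B : ℕ) {u : ℂ} {r : ℝ} (hr : 0 < r)
    (hru : r < ‖1 - u‖) : ContinuousOn (fIntegrand A B u) (sphere 0 r) := by
  intro z hz
  rw [mem_sphere_zero_iff_norm] at hz
  exact (hasDerivAt_fIntegrand_z A B (norm_pos_iff.1 (hz ▸ hr))
    (add_sub_one_ne_zero_of_norm_lt (hz ▸ hru))).continuousAt.continuousWithinAt

theorem f_eq_circleIntegral (A B : ℕ) {u : ℂ} {r : ℝ} (hr : 0 < r) (hru : r < ‖1 - u‖) :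
    f A B u = (2 * Real.pi * I)⁻¹ * ∮ z in C(0, r), fIntegrand A B u z := by
  have hd : DifferentiableOn ℂ (fIntegrand A B u) (ball 0 ‖1 - u‖ \ {0}) := fun z ⟨hz, hz0⟩ =>
    (hasDerivAt_fIntegrand_z A B hz0 (add_sub_one_ne_zero_of_norm_lt
      (mem_ball_zero_iff.1 hz))).differentiableAt.differentiableWithinAt
  have hu : 0 < ‖1 - u‖ := hr.trans hru
  change (2 * Real.pi * I)⁻¹ * ∮ z in C(0, ‖1 - u‖ / 2), fIntegrand A B u z = _
  rw [circleIntegral_eq_of_differentiableOn_ball_diff_center hd (half_pos hu) (half_lt_self hu)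
    hr hru]

theorem circleIntegral_fIntegrand_sub_two_mul_add (a₁ b₁ a₂ b₂ a₃ b₃ : ℕ) {u : ℂ} {r : ℝ}
    (hr : 0 < r) (hru : r < ‖1 - u‖) :
    (2 * Real.pi * I)⁻¹ * (∮ z in C(0, r),
        (fIntegrand a₁ b₁ u z - 2 * fIntegrand a₂ b₂ u z + fIntegrand a₃ b₃ u z)) =
      f a₁ b₁ u - 2 * f a₂ b₂ u + f a₃ b₃ u := by
  have hc (a b : ℕ) := continuousOn_fIntegrand_sphere a b hr hru
  have hc₂ : ContinuousOn (fun z => 2 * fIntegrand a₂ b₂ u z) (sphere 0 r) :=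
    continuousOn_const.mul (hc a₂ b₂)
  have hc₁₂ : ContinuousOn (fun z => fIntegrand a₁ b₁ u z - 2 * fIntegrand a₂ b₂ u z)
      (sphere 0 r) := (hc a₁ b₁).sub hc₂
  rw [circleIntegral.integral_add (hc₁₂.circleIntegrable hr.le)
      ((hc a₃ b₃).circleIntegrable hr.le),
    circleIntegral.integral_sub ((hc a₁ b₁).circleIntegrable hr.le) (hc₂.circleIntegrable hr.le),
    circleIntegral.integral_const_mul, f_eq_circleIntegral a₁ b₁ hr hru,
    f_eq_circleIntegral a₂ b₂ hr hru, f_eq_circleIntegral a₃ b₃ hr hru]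
  ring

theorem hasDerivAt_f_secondDiffA (A B : ℕ) {u : ℂ} (hu : u ≠ 1) :
    HasDerivAt (f A B) (-A * (f (A + 1) B u - 2 * f A B u + f (A - 1) B u)) u := by
  set d := ‖1 - u‖
  have hd : 0 < d := norm_pos_iff.2 (sub_ne_zero.2 hu.symm)
  have hne {v z : ℂ} (hv : v ∈ closedBall u (d / 4)) (hz : z ∈ sphere 0 (d / 2)) :
      z ≠ 0 ∧ v + z - 1 ≠ 0 := by
    rw [mem_closedBall, dist_eq_norm] at hv
    rw [mem_sphere_zero_iff_norm] at hz
    refine ⟨norm_pos_iff.1 (by linarith), add_sub_one_ne_zero_of_norm_lt ?_⟩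
    linarith [norm_sub_le_norm_sub_add_norm_sub 1 v u, norm_sub_rev v u]
  have hloc : f A B =ᶠ[𝓝 u]
      fun v => (2 * Real.pi * I)⁻¹ * ∮ z in C(0, d / 2), fIntegrand A B v z := by
    filter_upwards [(isOpen_lt continuous_const (continuous_const.sub continuous_id).norm).mem_nhds
      (half_lt_self hd)] with v hv using f_eq_circleIntegral A B (half_pos hd) hv
  have hc (a b : ℕ) := continuousOn_uncurry_fIntegrand a b
    (s := closedBall u (d / 4) ×ˢ sphere 0 (d / 2)) fun p hp => hne hp.1 hp.2
  have hcomb : ContinuousOn (fun p : ℂ × ℂ => -A * (fIntegrand (A + 1) B p.1 p.2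
      - 2 * fIntegrand A B p.1 p.2 + fIntegrand (A - 1) B p.1 p.2))
      (closedBall u (d / 4) ×ˢ sphere 0 (d / 2)) :=
    continuousOn_const.mul (((hc _ _).sub (continuousOn_const.mul (hc _ _))).add (hc _ _))
  have hint := hasDerivAt_circleIntegral_of_continuousOn (half_pos hd).le
    (by positivity : 0 < d / 4) (hc A B) (F' := fun v z => -A * (fIntegrand (A + 1) B v z
      - 2 * fIntegrand A B v z + fIntegrand (A - 1) B v z)) hcomb
    fun v hv z hz => hasDerivAt_fIntegrand_u A B (hne (ball_subset_closedBall hv) hz).2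
  refine ((hint.const_mul _).congr_of_eventuallyEq hloc).congr_deriv ?_
  rw [circleIntegral.integral_const_mul, mul_left_comm,
    circleIntegral_fIntegrand_sub_two_mul_add _ _ _ _ _ _ (half_pos hd) (half_lt_self hd)]

theorem secondDiffA_f_eq_secondDiffB (A B : ℕ) {u : ℂ} (hu : u ≠ 1) :
    A * (f (A + 1) B u - 2 * f A B u + f (A - 1) B u) =
      B * (f A (B + 1) u - 2 * f A B u + f A (B - 1) u) := by
  set r := ‖1 - u‖ / 2
  have hd : 0 < ‖1 - u‖ := norm_pos_iff.2 (sub_ne_zero.2 hu.symm)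
  have hr : 0 < r := half_pos hd
  have hru : r < ‖1 - u‖ := half_lt_self hd
  have hzero := circleIntegral.integral_eq_zero_of_hasDerivWithinAt hr.le fun z hz =>
    have hz' : ‖z‖ = r := mem_sphere_zero_iff_norm.1 hz
    (hasDerivAt_fIntegrand_z A B (norm_pos_iff.1 (hz' ▸ hr))
      (add_sub_one_ne_zero_of_norm_lt (hz' ▸ hru))).hasDerivWithinAt
  have hc (a b : ℕ) := continuousOn_fIntegrand_sphere a b hr hru
  have hcomb (a₁ b₁ a₂ b₂ a₃ b₃ : ℕ) (c : ℂ) : CircleIntegrable (fun z => c * (fIntegrand a₁ b₁ u z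
      - 2 * fIntegrand a₂ b₂ u z + fIntegrand a₃ b₃ u z)) 0 r :=
    (continuousOn_const.mul (((hc _ _).sub (continuousOn_const.mul (hc _ _))).add
      (hc _ _))).circleIntegrable hr.le
  rw [circleIntegral.integral_sub (hcomb ..) (hcomb ..), circleIntegral.integral_const_mul,
    circleIntegral.integral_const_mul] at hzero
  rw [← circleIntegral_fIntegrand_sub_two_mul_add _ _ _ _ _ _ hr hru,
    ← circleIntegral_fIntegrand_sub_two_mul_add _ _ _ _ _ _ hr hru]
  linear_combination -(2 * Real.pi * I)⁻¹ * hzero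

theorem hasDerivAt_f_secondDiffB (A B : ℕ) {u : ℂ} (hu : u ≠ 1) :
    HasDerivAt (f A B) (-B * (f A (B + 1) u - 2 * f A B u + f A (B - 1) u)) u := by
  rw [neg_mul, ← secondDiffA_f_eq_secondDiffB A B hu, ← neg_mul]
  exact hasDerivAt_f_secondDiffA A B hu

theorem stmt2_general (A B : ℕ) (u : ℂ) (hu : u ≠ 1) :
    iteratedDeriv 2 (f A B) u =
      (A : ℂ) * (B : ℂ) *
        (f (A - 1) (B - 1) u + f (A - 1) (B + 1) u + f (A + 1) (B - 1) u
            + f (A + 1) (B + 1) u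
          - 2 * f (A - 1) B u - 2 * f A (B - 1) u - 2 * f (A + 1) B u
            - 2 * f A (B + 1) u
          + 4 * f A B u) := by
  have hderiv : deriv (f A B) =ᶠ[𝓝 u]
      fun v => -A * (f (A + 1) B v - 2 * f A B v + f (A - 1) B v) := by
    filter_upwards [isOpen_compl_singleton.mem_nhds hu] with v hv
    exact (hasDerivAt_f_secondDiffA A B hv).deriv
  have hderiv₂ : HasDerivAt (fun v => -A * (f (A + 1) B v - 2 * f A B v + f (A - 1) B v)) _ u :=
    ((hasDerivAt_f_secondDiffB (A + 1) B hu).sub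
      ((hasDerivAt_f_secondDiffB A B hu).const_mul 2)
      |>.add (hasDerivAt_f_secondDiffB (A - 1) B hu)).const_mul (-A : ℂ)
  rw [iteratedDeriv_succ, iteratedDeriv_one, hderiv.deriv_eq, hderiv₂.deriv]
  ring

/-- Second-derivative identity (\ref{fAB-der-der}). -/
theorem stmt2 (A B : ℕ) (hA : 1 ≤ A) (hB : 1 ≤ B) (u : ℂ) (hu : u ≠ 1) :
    iteratedDeriv 2 (f A B) u =
      (A : ℂ) * (B : ℂ) *
        (f (A - 1) (B - 1) u + f (A - 1) (B + 1) u + f (A + 1) (B - 1) u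
            + f (A + 1) (B + 1) u
          - 2 * f (A - 1) B u - 2 * f A (B - 1) u - 2 * f (A + 1) B u
            - 2 * f A (B + 1) u
          + 4 * f A B u) :=
  stmt2_general A B u hu
end

section
/- Let k be an integer, and for real μ ≠ 0 define g₁(μ) := (e^μ + e^{−μ} + 2)·v_k'(μ)/(e^μ − e^{−μ}) and g₂(μ) := (e^μ + e^{−μ} + 2)·g₁'(μ)/(e^μ − e^{−μ}) + g₁(μ). Then for every real λ ≠ 0, g₂ is differentiable at λ and g₂'(λ)/(e^λ − e^{−λ}) = ((2k+1)(2k−1)(2k−3)/32)·v_{k−3}(λ) − ((2k+1)(2k−1)(k−1)/4)·v_{k−2}(λ) + (3(2k+1)(2k−1)²/16)·v_{k−1}(λ) − ((2k+1)k(2k−1)/4)·v_k(λ) + ((2k+1)²(2k−1)/32)·v_{k+1}(λ). -/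
/-- `v k λ = ((e^λ − 1)/(e^λ + 1))^{2k+1}`, an integer (possibly negative) power. -/
noncomputable def v (k : ℤ) (l : ℝ) : ℝ :=
  ((Real.exp l - 1) / (Real.exp l + 1)) ^ (2 * k + 1)

/-!
With `x = e^λ + e^{-λ} + 2` we have `g₁ = x∂_x v_k`, `g₂ = (x∂_x + 1) g₁`, and the claim concerns
`∂_x g₂`. Put `t = (e^λ - 1)/(e^λ + 1) = tanh (λ/2)`, so that `v_j = t^(2j+1)`,
`dt/dλ = (1 - t²)/2`, `e^λ - e^{-λ} = 4t/(1 - t²)` and `x = 4/(1 - t²)`. A direct computation gives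
`x∂_x v_j = (2j+1)/2 · (v_{j-1} - v_j)` and `∂_x v_j = (2j+1)/8 · (v_{j-1} - 2 v_j + v_{j+1})`.
Hence `g₁ = (2k+1)/2 · (v_{k-1} - v_k)` and `g₂ = (2k+1)(2k-1)/4 · (v_{k-2} - 2 v_{k-1} + v_k)`,
and the second rule applied once more gives the formula.
-/

open Real

noncomputable def tanhHalf (l : ℝ) : ℝ := (exp l - 1) / (exp l + 1)

lemma hasDerivAt_tanhHalf (l : ℝ) : HasDerivAt tanhHalf ((1 - tanhHalf l ^ 2) / 2) l := by
  have h1 : exp l + 1 ≠ 0 := by positivity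
  refine (((hasDerivAt_exp l).sub_const 1).div ((hasDerivAt_exp l).add_const 1) h1).congr_deriv ?_
  unfold tanhHalf
  field_simp
  ring

lemma tanhHalf_ne_zero {l : ℝ} (hl : l ≠ 0) : tanhHalf l ≠ 0 := by
  have h1 : exp l + 1 ≠ 0 := by positivity
  have h2 : exp l - 1 ≠ 0 := sub_ne_zero.mpr ((exp_eq_one_iff l).not.mpr hl)
  exact div_ne_zero h2 h1

lemma one_sub_tanhHalf_sq_pos (l : ℝ) : 0 < 1 - tanhHalf l ^ 2 := by
  have hE := exp_pos l
  have h1 : (0 : ℝ) < (exp l + 1) ^ 2 := by positivity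
  rw [tanhHalf, div_pow, sub_pos, div_lt_one h1]
  nlinarith

lemma exp_sub_exp_neg_eq (l : ℝ) :
    exp l - exp (-l) = 4 * tanhHalf l / (1 - tanhHalf l ^ 2) := by
  rw [eq_div_iff (one_sub_tanhHalf_sq_pos l).ne', tanhHalf, exp_neg]
  have h1 : exp l + 1 ≠ 0 := by positivity
  field_simp
  ring

lemma exp_add_exp_neg_add_two_eq (l : ℝ) :
    exp l + exp (-l) + 2 = 4 / (1 - tanhHalf l ^ 2) := by
  rw [eq_div_iff (one_sub_tanhHalf_sq_pos l).ne', tanhHalf, exp_neg]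
  have h1 : exp l + 1 ≠ 0 := by positivity
  field_simp
  ring

lemma v_add_one (j : ℤ) (l : ℝ) : v (j + 1) l = v j l * tanhHalf l ^ 2 := by
  change tanhHalf l ^ (2 * (j + 1) + 1) = tanhHalf l ^ (2 * j + 1) * tanhHalf l ^ 2
  rw [← zpow_natCast, ← zpow_add' (Or.inr (Or.inl (by omega)))]
  congr 1
  push_cast
  ring

lemma hasDerivAt_v (j : ℤ) {l : ℝ} (hl : l ≠ 0) :
    HasDerivAt (v j) (((2 * j + 1) / 2 : ℝ) * tanhHalf l * (v (j - 1) l - v j l)) l := by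
  obtain ⟨i, rfl⟩ : ∃ i, j = i + 1 := ⟨j - 1, by ring⟩
  have hexp : tanhHalf l ^ (2 * (i + 1)) = v i l * tanhHalf l := by
    change _ = tanhHalf l ^ (2 * i + 1) * tanhHalf l
    rw [← zpow_add_one₀ (tanhHalf_ne_zero hl)]
    ring_nf
  refine ((hasDerivAt_zpow _ _ (Or.inl (tanhHalf_ne_zero hl))).comp l
    (hasDerivAt_tanhHalf l)).congr_deriv ?_
  rw [add_sub_cancel_right, add_sub_cancel_right, v_add_one, hexp]
  push_cast
  ring

lemma differentiableAt_v (j : ℤ) {l : ℝ} (hl : l ≠ 0) : DifferentiableAt ℝ (v j) l :=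
  (hasDerivAt_v j hl).differentiableAt

lemma deriv_v_div_exp_sub_exp_neg (j : ℤ) {l : ℝ} (hl : l ≠ 0) :
    deriv (v j) l / (exp l - exp (-l)) =
      (2 * j + 1) / 8 * (v (j - 1) l - 2 * v j l + v (j + 1) l) := by
  obtain ⟨i, rfl⟩ : ∃ i, j = i + 1 := ⟨j - 1, by ring⟩
  rw [(hasDerivAt_v _ hl).deriv, add_sub_cancel_right, v_add_one (i + 1), v_add_one i,
    exp_sub_exp_neg_eq]
  field_simp [tanhHalf_ne_zero hl, (one_sub_tanhHalf_sq_pos l).ne']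
  ring

lemma exp_add_exp_neg_add_two_mul_deriv_v_div (j : ℤ) {l : ℝ} (hl : l ≠ 0) :
    (exp l + exp (-l) + 2) * deriv (v j) l / (exp l - exp (-l)) =
      (2 * j + 1) / 2 * (v (j - 1) l - v j l) := by
  rw [(hasDerivAt_v j hl).deriv, exp_add_exp_neg_add_two_eq, exp_sub_exp_neg_eq]
  field_simp [tanhHalf_ne_zero hl, (one_sub_tanhHalf_sq_pos l).ne']

/-- The action of `∂_x (x∂_x + 1) x∂_x` (with `x = e^λ + e^{−λ} + 2`) on `v_k`.
Here `g₁ = x∂_x v_k` and `g₂ = (x∂_x + 1) g₁`. -/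
theorem stmt18 (k : ℤ) (g₁ g₂ : ℝ → ℝ)
    (hg₁ : ∀ μ : ℝ, μ ≠ 0 →
      g₁ μ = (Real.exp μ + Real.exp (-μ) + 2) * deriv (v k) μ /
        (Real.exp μ - Real.exp (-μ)))
    (hg₂ : ∀ μ : ℝ, μ ≠ 0 →
      g₂ μ = (Real.exp μ + Real.exp (-μ) + 2) * deriv g₁ μ /
        (Real.exp μ - Real.exp (-μ)) + g₁ μ)
    (l : ℝ) (hl : l ≠ 0) :
    DifferentiableAt ℝ g₂ l ∧
    deriv g₂ l / (Real.exp l - Real.exp (-l)) =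
      ((2 * (k : ℝ) + 1) * (2 * (k : ℝ) - 1) * (2 * (k : ℝ) - 3) / 32) * v (k - 3) l
      - ((2 * (k : ℝ) + 1) * (2 * (k : ℝ) - 1) * ((k : ℝ) - 1) / 4) * v (k - 2) l
      + (3 * (2 * (k : ℝ) + 1) * (2 * (k : ℝ) - 1) ^ 2 / 16) * v (k - 1) l
      - ((2 * (k : ℝ) + 1) * (k : ℝ) * (2 * (k : ℝ) - 1) / 4) * v k l
      + ((2 * (k : ℝ) + 1) ^ 2 * (2 * (k : ℝ) - 1) / 32) * v (k + 1) l := by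
  have hv (j : ℤ) {μ : ℝ} (hμ : μ ≠ 0) : HasDerivAt (v j) (deriv (v j) μ) μ :=
    (differentiableAt_v j hμ).hasDerivAt
  have hg₁_eq : ∀ μ, μ ≠ 0 → g₁ μ = (2 * k + 1) / 2 * (v (k - 1) μ - v k μ) := by
    intro μ hμ
    rw [hg₁ μ hμ, exp_add_exp_neg_add_two_mul_deriv_v_div k hμ]
  have hg₂_eq : ∀ μ, μ ≠ 0 →
      g₂ μ = (2 * k + 1) * (2 * k - 1) / 4 * (v (k - 2) μ - 2 * v (k - 1) μ + v k μ) := by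
    intro μ hμ
    have hd : HasDerivAt g₁ ((2 * k + 1) / 2 * (deriv (v (k - 1)) μ - deriv (v k) μ)) μ :=
      (((hv _ hμ).sub (hv _ hμ)).const_mul _).congr_of_eventuallyEq
        ((eventually_ne_nhds hμ).mono hg₁_eq)
    have e₁ := exp_add_exp_neg_add_two_mul_deriv_v_div (k - 1) hμ
    have e₀ := exp_add_exp_neg_add_two_mul_deriv_v_div k hμ
    rw [hg₂ μ hμ, hd.deriv, hg₁_eq μ hμ]
    push_cast at e₁
    -- `ring_nf` also identifies the indices `k - 1 - 1` and `k - 2` inside `v`.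
    linear_combination (norm := ring_nf) (2 * k + 1) / 2 * (e₁ - e₀)
  have hd : HasDerivAt g₂ ((2 * k + 1) * (2 * k - 1) / 4 *
      (deriv (v (k - 2)) l - 2 * deriv (v (k - 1)) l + deriv (v k) l)) l :=
    ((((hv _ hl).sub ((hv _ hl).const_mul 2)).add (hv _ hl)).const_mul _).congr_of_eventuallyEq
      ((eventually_ne_nhds hl).mono hg₂_eq)
  refine ⟨hd.differentiableAt, ?_⟩
  have e₂ := deriv_v_div_exp_sub_exp_neg (k - 2) hl
  have e₁ := deriv_v_div_exp_sub_exp_neg (k - 1) hl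
  have e₀ := deriv_v_div_exp_sub_exp_neg k hl
  push_cast at e₂ e₁
  rw [hd.deriv]
  linear_combination (norm := ring_nf)
    (2 * k + 1) * (2 * k - 1) / 4 * (e₂ - 2 * e₁ + e₀)
end
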